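/- Let α be a circle of radius r and let S be a set of exactly 6 circles, each orthogonal to α, each of radius at least r, and pairwise non-nested. Then every circle in S has radius exactly r. -/

import Mathlib

/-!
Let `u_p` be the centre of `p ∈ S` seen from the centre of `α`, so that `‖u_p‖² = r² + ρ_p²`.
Two circles of `S` are orthogonal, or disjoint and not nested, hence apart; either way
`ρ_p² + ρ_q² ≤ ‖u_p - u_q‖²`, i.e. `⟪u_p, u_q⟫ ≤ r²`. Since `‖u_p‖ ‖u_q‖ ≥ 2 r²`, the angle
between `u_p` and `u_q` is at least `π / 3`, so six centres are spaced exactly `π / 3` apart. For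
two neighbours the inequalities become equalities, which forces `‖u_p‖² = 2 r²`, i.e. `ρ_p = r`.
-/

open Real Metric Finset

section SphereIntersection

variable {E : Type*} [NormedAddCommGroup E] [NormedSpace ℝ E]

/-- On the connected sphere `sphere y r₂` the distance to `x` takes the values `|r₂ - dist x y|`
and `dist x y + r₂`, hence every value in between. -/
theorem Metric.sphere_inter_sphere_nonempty (hE : 1 < Module.rank ℝ E) {x y : E} {r₁ r₂ : ℝ}
    (hlo : |r₁ - r₂| ≤ dist x y) (hhi : dist x y ≤ r₁ + r₂) :
    (sphere x r₁ ∩ sphere y r₂).Nonempty := by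
  have hr₂ : 0 ≤ r₂ := by linarith [le_abs_self (r₁ - r₂)]
  have hconn := isConnected_sphere hE y hr₂
  rcases (dist_nonneg (x := x) (y := y)).eq_or_lt with hd | hd
  · obtain rfl : x = y := dist_le_zero.mp hd.ge
    obtain rfl : r₁ = r₂ := sub_eq_zero.mp (abs_nonpos_iff.mp (hd ▸ hlo))
    simpa using hconn.nonempty
  · set d := dist x y
    set v : E := (r₂ / d) • (x - y)
    have hv : v ∈ sphere 0 r₂ := by
      rw [mem_sphere_zero_iff_norm, norm_smul, ← dist_eq_norm, Real.norm_of_nonneg (by positivity),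
        div_mul_cancel₀ _ hd.ne']
    have hnear : dist (y + v) x = |r₂ - d| := by
      have hcoef : (r₂ / d - 1) * d = r₂ - d := by field_simp
      rw [dist_eq_norm, show y + v - x = (r₂ / d - 1) • (x - y) by module, norm_smul,
        Real.norm_eq_abs, ← dist_eq_norm, ← hcoef, abs_mul, abs_of_pos hd]
    have hfar : dist (y - v) x = d + r₂ := by
      rw [dist_eq_norm, show y - v - x = -((1 + r₂ / d) • (x - y)) by module, norm_neg, norm_smul,
        Real.norm_of_nonneg (by positivity), ← dist_eq_norm, add_mul, div_mul_cancel₀ _ hd.ne',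
        one_mul]
    have hr₁ : r₁ ∈ Set.Icc (dist (y + v) x) (dist (y - v) x) := by
      rw [hnear, hfar, abs_le] at *
      exact ⟨abs_le.mpr ⟨by linarith, by linarith⟩, by linarith⟩
    obtain ⟨z, hz, hzx⟩ := hconn.isPreconnected.intermediate_value
      (by simpa [dist_eq_norm] using hv) (by simpa [dist_eq_norm] using hv)
      (continuous_id.dist continuous_const).continuousOn hr₁
    exact ⟨z, hzx, hz⟩

theorem Metric.add_lt_dist_of_disjoint_sphere (hE : 1 < Module.rank ℝ E) {x y : E} {r₁ r₂ : ℝ}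
    (hdisj : Disjoint (sphere x r₁) (sphere y r₂)) (hxy : ¬ closedBall x r₁ ⊆ closedBall y r₂)
    (hyx : ¬ closedBall y r₂ ⊆ closedBall x r₁) :
    r₁ + r₂ < dist x y := by
  by_contra! hhi
  have h₁ : r₁ < r₂ + dist x y := by
    by_contra! h
    exact hyx (closedBall_subset_closedBall' (by rwa [dist_comm]))
  have h₂ : r₂ < r₁ + dist x y := by
    by_contra! h
    exact hxy (closedBall_subset_closedBall' h)
  exact (Set.disjoint_iff_inter_eq_empty.mp hdisj ▸
    sphere_inter_sphere_nonempty hE (abs_sub_le_iff.mpr ⟨by linarith, by linarith⟩) hhi).ne_empty rfl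

theorem Metric.sq_add_sq_le_dist_sq_of_not_nested (hE : 1 < Module.rank ℝ E) {x y : E}
    {r₁ r₂ : ℝ} (h₁ : 0 ≤ r₁) (h₂ : 0 ≤ r₂)
    (harr : Disjoint (sphere x r₁) (sphere y r₂) ∨ r₁ ^ 2 + r₂ ^ 2 = dist x y ^ 2)
    (hxy : ¬ closedBall x r₁ ⊆ closedBall y r₂) (hyx : ¬ closedBall y r₂ ⊆ closedBall x r₁) :
    r₁ ^ 2 + r₂ ^ 2 ≤ dist x y ^ 2 := by
  rcases harr with hdisj | horth
  · nlinarith [add_lt_dist_of_disjoint_sphere hE hdisj hxy hyx]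
  · exact horth.le

end SphereIntersection

theorem Real.le_abs_and_abs_le_two_pi_sub_of_cos_le {t δ : ℝ} (hδπ : δ ≤ π)
    (ht : |t| < 2 * π) (h : cos t ≤ cos δ) : δ ≤ |t| ∧ |t| ≤ 2 * π - δ := by
  constructor
  · by_contra! hlt
    have := cos_lt_cos_of_nonneg_of_le_pi (abs_nonneg t) hδπ hlt
    rw [cos_abs] at this
    linarith
  · by_contra! hlt
    have := cos_lt_cos_of_nonneg_of_le_pi (by linarith) hδπ (show 2 * π - |t| < δ by linarith)
    rw [cos_two_pi_sub, cos_abs] at this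
    linarith

theorem Complex.real_inner_eq_norm_mul_norm_mul_cos_arg_sub (z w : ℂ) :
    inner ℝ z w = ‖z‖ * ‖w‖ * Real.cos (z.arg - w.arg) := by
  rw [Complex.inner, mul_re, conj_re, conj_im, Real.cos_sub, ← norm_mul_cos_arg z,
    ← norm_mul_sin_arg z, ← norm_mul_cos_arg w, ← norm_mul_sin_arg w]
  ring

theorem Finset.eq_image_range_of_subset_Icc_of_le_abs_sub (n : ℕ) {A : Finset ℝ} {a δ : ℝ}
    (hcard : #A = n + 1) (hA : ∀ x ∈ A, x ∈ Set.Icc a (a + n * δ))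
    (hsep : ∀ x ∈ A, ∀ y ∈ A, x ≠ y → δ ≤ |x - y|) :
    A = (range (n + 1)).image (fun k : ℕ => a + k * δ) := by
  induction n generalizing A with
  | zero =>
    obtain ⟨x, rfl⟩ := card_eq_one.mp hcard
    have := hA x (mem_singleton_self x)
    simp only [CharP.cast_eq_zero, zero_mul, add_zero, Set.mem_Icc] at this
    simp [le_antisymm this.2 this.1]
  | succ n ih =>
    have hne : A.Nonempty := card_pos.mp (by omega)
    set M := A.max' hne
    have hM : M ∈ A := max'_mem A hne
    have hbelow : ∀ x ∈ A.erase M, x + δ ≤ M := fun x hx => by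
      have := hsep M hM x (mem_of_mem_erase hx) (ne_of_mem_erase hx).symm
      rwa [abs_of_nonneg (sub_nonneg.mpr (le_max' A x (mem_of_mem_erase hx))), le_sub_iff_add_le']
        at this
    have hMle : M ≤ a + (n + 1 : ℕ) * δ := (hA M hM).2
    have herase := ih (A := A.erase M) (by rw [card_erase_of_mem hM, hcard]; rfl)
      (fun x hx => ⟨(hA x (mem_of_mem_erase hx)).1, by push_cast at hMle; linarith [hbelow x hx]⟩)
      (fun x hx y hy => hsep x (mem_of_mem_erase hx) y (mem_of_mem_erase hy))
    have hMeq : M = a + (n + 1 : ℕ) * δ := by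
      refine le_antisymm hMle ?_
      have := hbelow (a + n * δ) (herase ▸ mem_image_of_mem _ (self_mem_range_succ n))
      push_cast; linarith
    rw [← insert_erase hM, herase, hMeq, range_add_one (n := n + 1), image_insert]

theorem Finset.exists_abs_sub_eq_of_subset_Icc_of_le_abs_sub {n : ℕ} (hn : n ≠ 0) {A : Finset ℝ}
    {a δ : ℝ} (hcard : #A = n + 1) (hA : ∀ x ∈ A, x ∈ Set.Icc a (a + n * δ))
    (hsep : ∀ x ∈ A, ∀ y ∈ A, x ≠ y → δ ≤ |x - y|) :
    ∀ x ∈ A, ∃ y ∈ A, |x - y| = δ := by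
  have hAeq := eq_image_range_of_subset_Icc_of_le_abs_sub n hcard hA hsep
  have hmem : ∀ k ≤ n, a + k * δ ∈ A := fun k hk =>
    hAeq ▸ mem_image_of_mem _ (mem_range_succ_iff.mpr hk)
  intro x hx
  have hδ : 0 ≤ δ := by
    have := hA x hx
    exact (mul_nonneg_iff_of_pos_left (by positivity : (0 : ℝ) < n)).mp
      (by linarith [this.1, this.2])
  obtain ⟨k, hk, rfl⟩ := mem_image.mp (hAeq ▸ hx)
  rw [mem_range_succ_iff] at hk
  rcases hk.lt_or_eq with hlt | rfl
  · exact ⟨_, hmem (k + 1) hlt, by push_cast; rw [abs_sub_comm]; ring_nf; exact abs_of_nonneg hδ⟩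
  · obtain ⟨m, rfl⟩ := Nat.exists_eq_succ_of_ne_zero hn
    exact ⟨_, hmem m m.le_succ, by push_cast; ring_nf; exact abs_of_nonneg hδ⟩

/-- `m` points of the circle at pairwise angular distance at least `2π / m` are equally spaced. -/
theorem exists_abs_sub_eq_two_pi_div_card_of_cos_sub_le {ι : Type*} {s : Finset ι} {θ : ι → ℝ}
    (hs : 2 ≤ #s) (hθ : ∀ i ∈ s, θ i ∈ Set.Ioc (-π) π)
    (hsep : ∀ i ∈ s, ∀ j ∈ s, i ≠ j → cos (θ i - θ j) ≤ cos (2 * π / #s)) :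
    ∀ i ∈ s, ∃ j ∈ s, |θ i - θ j| = 2 * π / #s := by
  set δ := 2 * π / #s
  have hcard : (#s : ℝ) * δ = 2 * π := mul_div_cancel₀ _ (by positivity)
  have hδπ : δ ≤ π := by
    rw [div_le_iff₀ (by positivity)]
    nlinarith [pi_pos, (show (2 : ℝ) ≤ #s by exact_mod_cast hs)]
  have hgap : ∀ i ∈ s, ∀ j ∈ s, i ≠ j → δ ≤ |θ i - θ j| ∧ |θ i - θ j| ≤ 2 * π - δ :=
    fun i hi j hj hij => le_abs_and_abs_le_two_pi_sub_of_cos_le hδπ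
      (abs_sub_lt_iff.mpr
        ⟨by linarith [(hθ i hi).2, (hθ j hj).1], by linarith [(hθ i hi).1, (hθ j hj).2]⟩)
      (hsep i hi j hj hij)
  have hinj : Set.InjOn θ s := fun i hi j hj hθij => by
    by_contra hij
    have := (hgap i hi j hj hij).1
    rw [hθij, sub_self, abs_zero] at this
    exact (div_pos two_pi_pos (by positivity : (0 : ℝ) < #s)).not_ge this
  set A := s.image θ
  have hgapA : ∀ x ∈ A, ∀ y ∈ A, x ≠ y → δ ≤ |x - y| ∧ |x - y| ≤ 2 * π - δ := by
    simp only [A, mem_image]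
    rintro _ ⟨i, hi, rfl⟩ _ ⟨j, hj, rfl⟩ hij
    exact hgap i hi j hj (fun h => hij (h ▸ rfl))
  obtain ⟨n, hn⟩ : ∃ n, #s = n + 1 := ⟨#s - 1, by omega⟩
  have hnδ : (n : ℝ) * δ = 2 * π - δ := by
    rw [hn] at hcard; push_cast at hcard; linarith
  have hAne : A.Nonempty := (s.card_pos.mp (by omega)).image θ
  have hA : ∀ x ∈ A, x ∈ Set.Icc (A.min' hAne) (A.min' hAne + n * δ) := by
    intro x hx
    refine ⟨min'_le A x hx, ?_⟩
    rcases eq_or_ne x (A.min' hAne) with rfl | hne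
    · nlinarith [pi_pos]
    · have := (hgapA x hx _ (min'_mem A hAne) hne).2
      rw [abs_of_nonneg (sub_nonneg.mpr (min'_le A x hx))] at this
      linarith
  intro i hi
  obtain ⟨y, hy, hδy⟩ := exists_abs_sub_eq_of_subset_Icc_of_le_abs_sub (by omega)
    (by rw [card_image_of_injOn hinj, hn]) hA (fun x hx y hy hxy => (hgapA x hx y hy hxy).1)
    (θ i) (mem_image_of_mem θ hi)
  obtain ⟨j, hj, rfl⟩ := mem_image.mp hy
  exact ⟨j, hj, hδy⟩

theorem real_inner_sub_sub_le_sq {F : Type*} [NormedAddCommGroup F] [InnerProductSpace ℝ F]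
    {c x y : F} {r r₁ r₂ : ℝ} (hx : r ^ 2 + r₁ ^ 2 = dist c x ^ 2)
    (hy : r ^ 2 + r₂ ^ 2 = dist c y ^ 2) (hxy : r₁ ^ 2 + r₂ ^ 2 ≤ dist x y ^ 2) :
    inner ℝ (x - c) (y - c) ≤ r ^ 2 := by
  rw [dist_eq_norm, ← sub_sub_sub_cancel_right x y c, norm_sub_sq_real] at hxy
  rw [dist_comm, dist_eq_norm] at hx hy
  linarith

section Arg

variable {r : ℝ} {z w : ℂ}

theorem Complex.two_mul_sq_le_norm_mul_norm (hz : 2 * r ^ 2 ≤ ‖z‖ ^ 2)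
    (hw : 2 * r ^ 2 ≤ ‖w‖ ^ 2) : 2 * r ^ 2 ≤ ‖z‖ * ‖w‖ := by
  refine le_of_pow_le_pow_left₀ two_ne_zero (by positivity) ?_
  rw [mul_pow]
  nlinarith

theorem Complex.cos_arg_sub_le_half_of_inner_le (hr : 0 < r) (hz : 2 * r ^ 2 ≤ ‖z‖ ^ 2)
    (hw : 2 * r ^ 2 ≤ ‖w‖ ^ 2) (hinner : inner ℝ z w ≤ r ^ 2) :
    Real.cos (z.arg - w.arg) ≤ 1 / 2 := by
  have hprod := two_mul_sq_le_norm_mul_norm hz hw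
  rw [real_inner_eq_norm_mul_norm_mul_cos_arg_sub] at hinner
  by_contra! hgt
  nlinarith [mul_lt_mul_of_pos_left hgt (hprod.trans_lt' (by positivity))]

theorem Complex.norm_sq_le_of_cos_arg_sub_eq_half (hr : 0 < r) (hw : 2 * r ^ 2 ≤ ‖w‖ ^ 2)
    (hinner : inner ℝ z w ≤ r ^ 2) (hcos : Real.cos (z.arg - w.arg) = 1 / 2) :
    ‖z‖ ^ 2 ≤ 2 * r ^ 2 := by
  rw [real_inner_eq_norm_mul_norm_mul_cos_arg_sub, hcos] at hinner
  have hprod : ‖z‖ ^ 2 * ‖w‖ ^ 2 ≤ 2 * r ^ 2 * ‖w‖ ^ 2 :=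
    calc ‖z‖ ^ 2 * ‖w‖ ^ 2 = (‖z‖ * ‖w‖) ^ 2 := by ring
      _ ≤ (2 * r ^ 2) ^ 2 := pow_le_pow_left₀ (by positivity) (by linarith) 2
      _ = 2 * r ^ 2 * (2 * r ^ 2) := by ring
      _ ≤ 2 * r ^ 2 * ‖w‖ ^ 2 := by gcongr
  exact le_of_mul_le_mul_right hprod (hw.trans_lt' (by positivity))

end Arg

/-- Equality case: if such a set `S` has exactly 6 circles, each orthogonal to
α, of radius at least `r`, pairwise disjoint-or-orthogonal and non-nested, then
every circle of `S` has radius exactly `r`. -/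
theorem six_neighbours_all_radius_eq
    (cα : EuclideanSpace ℝ (Fin 2)) (r : ℝ) (hr : 0 < r)
    (S : Finset (EuclideanSpace ℝ (Fin 2) × ℝ))
    (hpos : ∀ p ∈ S, r ≤ p.2)
    (horth : ∀ p ∈ S, r ^ 2 + p.2 ^ 2 = dist cα p.1 ^ 2)
    (harr : ∀ p ∈ S, ∀ q ∈ S, p ≠ q →
      Disjoint (Metric.sphere p.1 p.2) (Metric.sphere q.1 q.2) ∨
      p.2 ^ 2 + q.2 ^ 2 = dist p.1 q.1 ^ 2)
    (hnonnested : ∀ p ∈ S, ∀ q ∈ S, p ≠ q →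
      ¬ Metric.closedBall p.1 p.2 ⊆ Metric.closedBall q.1 q.2)
    (hcard : S.card = 6) :
    ∀ p ∈ S, p.2 = r := by
  have hE : 1 < Module.rank ℝ (EuclideanSpace ℝ (Fin 2)) := by
    rw [← Module.finrank_eq_rank, finrank_euclideanSpace]; norm_num
  let e : EuclideanSpace ℝ (Fin 2) ≃ₗᵢ[ℝ] ℂ := Complex.orthonormalBasisOneI.repr.symm
  let z : EuclideanSpace ℝ (Fin 2) × ℝ → ℂ := fun p => e (p.1 - cα)
  have hnorm : ∀ p ∈ S, ‖z p‖ ^ 2 = r ^ 2 + p.2 ^ 2 := fun p hp => by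
    rw [horth p hp, LinearIsometryEquiv.norm_map, dist_comm, dist_eq_norm]
  have hbig : ∀ p ∈ S, 2 * r ^ 2 ≤ ‖z p‖ ^ 2 := fun p hp => by
    nlinarith [hnorm p hp, hpos p hp]
  have hinner : ∀ p ∈ S, ∀ q ∈ S, p ≠ q → inner ℝ (z p) (z q) ≤ r ^ 2 := fun p hp q hq hpq => by
    rw [e.inner_map_map]
    exact real_inner_sub_sub_le_sq (horth p hp) (horth q hq)
      (sq_add_sq_le_dist_sq_of_not_nested hE (hr.le.trans (hpos p hp)) (hr.le.trans (hpos q hq))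
        (harr p hp q hq hpq) (hnonnested p hp q hq hpq) (hnonnested q hq p hp hpq.symm))
  have hangle : 2 * π / #S = π / 3 := by rw [hcard]; push_cast; ring
  intro p hp
  obtain ⟨q, hq, hpq⟩ := exists_abs_sub_eq_two_pi_div_card_of_cos_sub_le (by omega)
    (fun p _ => Complex.arg_mem_Ioc (z p)) (fun p hp q hq hpq => by
      rw [hangle, cos_pi_div_three]
      exact Complex.cos_arg_sub_le_half_of_inner_le hr (hbig p hp) (hbig q hq)
        (hinner p hp q hq hpq)) p hp
  rw [hangle] at hpq
  have hne : p ≠ q := by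
    rintro rfl
    rw [sub_self, abs_zero] at hpq
    linarith [pi_pos]
  have hsq := Complex.norm_sq_le_of_cos_arg_sub_eq_half hr (hbig q hq) (hinner p hp q hq hne)
    (by rw [← cos_abs, hpq, cos_pi_div_three])
  nlinarith [hnorm p hp, hpos p hp]
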